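/- If G is a finite split graph with χ(G) ≡ 1 (mod 3), then the robust chromatic number of G equals (χ(G) + 2)/3. -/

import Mathlib

open SimpleGraph

/-- A 1-selection on `G`: each vertex `v` selects (at most) one pair containing `v`;
deleting the selected pairs from the edge set removes at most one edge incident
to each vertex.  (Selecting a non-edge, e.g. the diagonal, deletes nothing at `v`.) -/
def IsOneSelection {V : Type*} (G : SimpleGraph V) (f : V → Sym2 V) : Prop :=
  ∀ v : V, v ∈ f v

/-- The 1-removed graph `G_f`. -/
def oneRemoved {V : Type*} (G : SimpleGraph V) (f : V → Sym2 V) : SimpleGraph V :=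
  G.deleteEdges (Set.range f)

/-- The chromatic number of `G` as a natural number. -/
noncomputable def chromNum {V : Type*} (G : SimpleGraph V) : ℕ :=
  sInf {n : ℕ | G.Colorable n}

/-- The robust chromatic number `χ₁(G)`: the minimum of `χ(G_f)` over all 1-selections. -/
noncomputable def robustChromNum {V : Type*} (G : SimpleGraph V) : ℕ :=
  sInf {m : ℕ | ∃ f : V → Sym2 V, IsOneSelection G f ∧ chromNum (oneRemoved G f) = m}

/-- The robust clique number `ω₁(G)`: the minimum of `ω(G_f)` over all 1-selections. -/
noncomputable def robustCliqueNum {V : Type*} (G : SimpleGraph V) : ℕ :=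
  sInf {m : ℕ | ∃ f : V → Sym2 V, IsOneSelection G f ∧ (oneRemoved G f).cliqueNum = m}

/-- A set of vertices is independent if no two of its elements are adjacent. -/
def IsIndepVxSet {V : Type*} (G : SimpleGraph V) (s : Set V) : Prop :=
  s.Pairwise fun a b => ¬ G.Adj a b

/-- The independence number of `G`. -/
noncomputable def indepNum {V : Type*} (G : SimpleGraph V) : ℕ :=
  sSup {n : ℕ | ∃ s : Finset V, IsIndepVxSet G ↑s ∧ s.card = n}

/-- The robust independence number `α₁(G)`: the maximum of `α(G_f)` over all 1-selections. -/
noncomputable def robustIndepNum {V : Type*} (G : SimpleGraph V) : ℕ :=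
  sSup {m : ℕ | ∃ f : V → Sym2 V, IsOneSelection G f ∧ _root_.indepNum (oneRemoved G f) = m}

/-- `U` is robust independent in `G` if some 1-selection makes it independent. -/
def IsRobustIndep {V : Type*} (G : SimpleGraph V) (U : Set V) : Prop :=
  ∃ f : V → Sym2 V, IsOneSelection G f ∧ IsIndepVxSet (oneRemoved G f) U

/-- Threshold graph. -/
def IsThresholdGraph {V : Type*} (G : SimpleGraph V) : Prop :=
  ∃ (h : ℝ) (g : V → ℝ), ∀ x y : V, x ≠ y → (G.Adj x y ↔ g x + g y > h)

/-- `G` is ω-unique: it has exactly one clique of order `ω(G)`. -/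
def IsOmegaUnique {V : Type*} (G : SimpleGraph V) : Prop :=
  ∃! s : Finset V, G.IsNClique G.cliqueNum s

/-- Split graph: vertex set partitions into a clique and an independent set. -/
def IsSplitGraph {V : Type*} (G : SimpleGraph V) : Prop :=
  ∃ A : Set V, G.IsClique A ∧ IsIndepVxSet G Aᶜ

/-- Chordal graph: no induced cycle of length greater than 3. -/
def IsChordalGraph {V : Type*} (G : SimpleGraph V) : Prop :=
  ∀ n : ℕ, 4 ≤ n → ¬ ∃ φ : Fin n ↪ V,
    ∀ i j : Fin n, G.Adj (φ i) (φ j) ↔ (SimpleGraph.cycleGraph n).Adj i j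

/-- Interval graph: vertices can be assigned nonempty closed real intervals so that
two distinct vertices are adjacent iff their intervals intersect. -/
def IsIntervalGraph {V : Type*} (G : SimpleGraph V) : Prop :=
  ∃ a b : V → ℝ, (∀ v, a v ≤ b v) ∧
    ∀ u v : V, u ≠ v →
      (G.Adj u v ↔ (Set.Icc (a u) (b u) ∩ Set.Icc (a v) (b v)).Nonempty)

/-- Unit interval graph: vertices can be labelled by reals so that two distinct
vertices are adjacent iff their labels are at distance less than 1. -/
def IsUnitIntervalGraph {V : Type*} (G : SimpleGraph V) : Prop :=
  ∃ r : V → ℝ, ∀ u v : V, u ≠ v → (G.Adj u v ↔ |r u - r v| < 1)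

/-- Quasi-unicyclic: every connected component contains at most one cycle,
i.e. any two cycles lying in the same component have the same edge set. -/
def QuasiUnicyclic {V : Type*} [DecidableEq V] (G : SimpleGraph V) : Prop :=
  ∀ (u v : V) (p : G.Walk u u) (q : G.Walk v v),
    p.IsCycle → q.IsCycle → G.Reachable u v →
      p.edges.toFinset = q.edges.toFinset

/-- The Kneser graph `KG(n,k)`. -/
def kneserGraph (n k : ℕ) : SimpleGraph {s : Finset (Fin n) // s.card = k} where
  Adj a b := a ≠ b ∧ Disjoint a.1 b.1
  symm := by
    constructor
    intro a b hab
    exact ⟨hab.1.symm, hab.2.symm⟩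
  loopless := by
    constructor
    intro a ha
    exact ha.1 rfl


/-!
Write `χ(G) = 3k + 1`. A split graph has a clique of order `χ(G)`: its clique part `A`,
enlarged by an outside vertex seeing all of `A` if there is one. A colour class of `G_f`
inside a clique of `G` has at most three vertices, since its `m` vertices must select all
`m(m-1)/2` of its edges; hence `χ(G_f) ≥ k + 1` for every 1-selection `f`. Conversely
`|A| ≤ 3k + 1`: cut `A` into triples, let each triple select the edges of a 3-cycle and
give it its own colour, and let every outside vertex select its edge to the leftover vertex
of `A`, which then shares the last colour with the independent part.
-/

open Finset

variable {V : Type*} {G : SimpleGraph V}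

theorem chromNum_le_of_colorable {n : ℕ} (h : G.Colorable n) : chromNum G ≤ n :=
  Nat.sInf_le h

theorem colorable_chromNum [Fintype V] : G.Colorable (chromNum G) :=
  Nat.sInf_mem (s := {n | G.Colorable n}) ⟨_, G.colorable_of_fintype⟩

theorem colorable_card_of_forall_exists_not_adj {s : Finset V} (hind : IsIndepVxSet G (↑s)ᶜ)
    (hout : ∀ v ∉ s, ∃ w ∈ s, ¬ G.Adj v w) : G.Colorable #s := by
  classical
  choose! r hrs hr using hout
  let C : G.Coloring s :=
    Coloring.mk (fun v => if hv : v ∈ s then ⟨v, hv⟩ else ⟨r v, hrs v hv⟩) fun {u v} hadj => by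
      by_cases hu : u ∈ s <;> by_cases hv : v ∈ s <;> simp only [hu, hv, dite_true, dite_false,
        ne_eq, Subtype.mk.injEq]
      · exact hadj.ne
      · exact fun h => hr v hv (h ▸ hadj.symm)
      · exact fun h => hr u hu (h ▸ hadj)
      · exact absurd hadj (hind hu hv hadj.ne)
  simpa using C.colorable

theorem exists_isClique_chromNum_le {t : Finset V} (ht : G.IsClique t)
    (hind : IsIndepVxSet G (↑t)ᶜ) : ∃ s : Finset V, G.IsClique s ∧ chromNum G ≤ #s := by
  classical
  by_cases h : ∃ b ∉ t, ∀ a ∈ t, G.Adj b a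
  · obtain ⟨b, hb, hbt⟩ := h
    refine ⟨insert b t, ?_, chromNum_le_of_colorable
      (colorable_card_of_forall_exists_not_adj ?_ fun v hv => ⟨b, mem_insert_self b t, ?_⟩)⟩
    · rw [coe_insert]
      exact ht.insert fun a ha _ => hbt a ha
    · exact hind.mono (Set.compl_subset_compl.2 (by simp))
    · obtain ⟨hvb, hvt⟩ := not_or.1 (mem_insert.not.1 hv)
      exact hind hvt hb hvb
  · push Not at h
    exact ⟨t, ht, chromNum_le_of_colorable (colorable_card_of_forall_exists_not_adj hind h)⟩

section Selection

variable {f : V → Sym2 V}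

theorem oneRemoved_adj {u v : V} :
    (oneRemoved G f).Adj u v ↔ G.Adj u v ∧ s(u, v) ∉ Set.range f :=
  deleteEdges_adj

theorem card_le_three_of_isClique_of_isIndepVxSet (hf : IsOneSelection G f) {s : Finset V}
    (hclique : G.IsClique s) (hind : IsIndepVxSet (oneRemoved G f) s) : #s ≤ 3 := by
  classical
  have hedges : s.offDiag.image Sym2.mk.uncurry ⊆ s.image f := by
    intro z hz
    obtain ⟨⟨a, b⟩, hab, rfl⟩ := mem_image.1 hz
    obtain ⟨ha, hb, hne⟩ := mem_offDiag.1 hab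
    obtain ⟨w, hw⟩ : s(a, b) ∈ Set.range f := by
      by_contra h
      exact hind ha hb hne (oneRemoved_adj.2 ⟨hclique ha hb hne, h⟩)
    have hws : w ∈ s := by
      have := hf w
      rw [hw, Sym2.mem_iff] at this
      rcases this with rfl | rfl <;> assumption
    exact mem_image.2 ⟨w, hws, hw⟩
  have hchoose : (#s).choose 2 ≤ #s := by
    rw [← Sym2.card_image_offDiag]
    exact (card_le_card hedges).trans card_image_le
  rw [Nat.choose_two_right] at hchoose
  by_contra! h
  have : #s * 3 ≤ #s * (#s - 1) := Nat.mul_le_mul_left _ (by omega)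
  omega

theorem card_le_three_mul_of_isClique (hf : IsOneSelection G f) {s : Finset V}
    (hs : G.IsClique s) {n : ℕ} (hc : (oneRemoved G f).Colorable n) : #s ≤ 3 * n := by
  classical
  obtain ⟨C⟩ := hc
  calc #s ≤ 3 * #(univ : Finset (Fin n)) :=
        card_le_mul_card_image_of_maps_to (fun v _ => mem_univ (C v)) 3 fun i _ =>
          card_le_three_of_isClique_of_isIndepVxSet hf (hs.subset (coe_subset.2 (filter_subset _ _)))
            fun u hu v hv _ hadj => by
              rw [mem_coe, mem_filter] at hu hv
              exact C.valid hadj (hu.2.trans hv.2.symm)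
    _ = 3 * n := by simp

theorem robustChromNum_eq_of_forall_le {m : ℕ}
    (hlow : ∀ f, IsOneSelection G f → m ≤ chromNum (oneRemoved G f))
    (hup : ∃ f, IsOneSelection G f ∧ (oneRemoved G f).Colorable m) : robustChromNum G = m := by
  obtain ⟨f, hf, hcol⟩ := hup
  have hmem : m ∈ {m | ∃ f, IsOneSelection G f ∧ chromNum (oneRemoved G f) = m} :=
    ⟨f, hf, le_antisymm (chromNum_le_of_colorable hcol) (hlow f hf)⟩
  refine le_antisymm (Nat.sInf_le hmem) (le_csInf ⟨m, hmem⟩ ?_)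
  rintro _ ⟨g, hg, rfl⟩
  exact hlow g hg

/-- `g u = some v` means that `u` selects its edge to `v`; `g u = none` selects `s(u, u)`,
which removes nothing. -/
theorem exists_oneSelection_coloring {α : Type*} (c : V → α) (g : V → Option V)
    (hc : ∀ u v, G.Adj u v → c u = c v → g u = some v ∨ g v = some u) :
    ∃ f, IsOneSelection G f ∧ Nonempty ((oneRemoved G f).Coloring α) := by
  refine ⟨fun u => s(u, (g u).getD u), fun u => Sym2.mem_mk_left _ _, ⟨Coloring.mk c ?_⟩⟩
  intro u v hadj hcuv
  rw [oneRemoved_adj] at hadj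
  apply hadj.2
  rcases hc u v hadj.1 hcuv with h | h
  · exact ⟨u, by simp [h]⟩
  · exact ⟨v, by simp [h, Sym2.eq_swap]⟩

end Selection

theorem Finset.exists_index (t : Finset V) :
    ∃ (idx : V → ℕ) (vtx : ℕ → Option V), ∀ v ∈ t, idx v < #t ∧ vtx (idx v) = some v := by
  classical
  let e := t.equivFin
  refine ⟨fun v => if hv : v ∈ t then e ⟨v, hv⟩ else 0,
    fun j => if hj : j < #t then some (e.symm ⟨j, hj⟩) else none, fun v hv => ?_⟩
  simp [hv]

/-- The successor of `j` in the 3-cycle `3q → 3q + 1 → 3q + 2 → 3q` through `j`. -/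
def tripleSucc (j : ℕ) : ℕ := 3 * (j / 3) + (j % 3 + 1) % 3

theorem tripleSucc_eq_or_eq {i j : ℕ} (hne : i ≠ j) (h : i / 3 = j / 3) :
    tripleSucc i = j ∨ tripleSucc j = i := by
  unfold tripleSucc
  omega

theorem exists_oneSelection_colorable_succ {t : Finset V} (hind : IsIndepVxSet G (↑t)ᶜ) {k : ℕ}
    (hcard : #t ≤ 3 * k + 1) : ∃ f, IsOneSelection G f ∧ (oneRemoved G f).Colorable (k + 1) := by
  classical
  obtain ⟨idx, vtx, hidx⟩ := t.exists_index
  let c : V → Fin (k + 1) := fun v =>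
    if hv : v ∈ t then ⟨idx v / 3, by have := (hidx v hv).1; omega⟩ else Fin.last k
  let g : V → Option V := fun v => vtx (if v ∈ t then tripleSucc (idx v) else 3 * k)
  have hin : ∀ u v, u ∈ t → G.Adj u v → c u = c v → g u = some v ∨ g v = some u := by
    intro u v hu hadj hcuv
    by_cases hv : v ∈ t
    · have hne : idx u ≠ idx v := fun h =>
        hadj.ne (Option.some_injective _ ((hidx u hu).2.symm.trans (h ▸ (hidx v hv).2)))
      simp only [c, hu, hv, dite_true, Fin.mk.injEq] at hcuv
      rcases tripleSucc_eq_or_eq hne hcuv with h | h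
      · left; simp [g, hu, h, (hidx v hv).2]
      · right; simp [g, hv, h, (hidx u hu).2]
    · simp only [c, hu, hv, dite_true, dite_false, Fin.ext_iff, Fin.val_last] at hcuv
      have : idx u = 3 * k := by have := (hidx u hu).1; omega
      right; simp [g, hv, ← this, (hidx u hu).2]
  obtain ⟨f, hf, ⟨C⟩⟩ := exists_oneSelection_coloring c g fun u v hadj hcuv => by
    by_cases hu : u ∈ t
    · exact hin u v hu hadj hcuv
    by_cases hv : v ∈ t
    · exact (hin v u hv hadj.symm hcuv.symm).symm
    · exact absurd hadj (hind hu hv hadj.ne)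
  exact ⟨f, hf, by simpa using C.colorable⟩

theorem robustChromNum_of_splitGraph_mod_three_general
    {V : Type} [Fintype V] (G : SimpleGraph V)
    (hsplit : IsSplitGraph G) (hmod : chromNum G % 3 = 1) :
    robustChromNum G = (chromNum G + 2) / 3 := by
  obtain ⟨A, hA, hB⟩ := hsplit
  lift A to Finset V using A.toFinite
  obtain ⟨s, hs, hχs⟩ := exists_isClique_chromNum_le hA hB
  have hk : (chromNum G + 2) / 3 = chromNum G / 3 + 1 := by omega
  apply robustChromNum_eq_of_forall_le
  · intro f hf
    have := card_le_three_mul_of_isClique hf hs colorable_chromNum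
    omega
  · rw [hk]
    refine exists_oneSelection_colorable_succ hB ?_
    have := hA.card_le_of_colorable (colorable_chromNum (G := G))
    omega

/-- If `G` is a finite split graph with `χ(G) ≡ 1 (mod 3)`, then
`χ₁(G) = (χ(G) + 2)/3`. -/
theorem robustChromNum_of_splitGraph_mod_three
    {V : Type} [Fintype V] [DecidableEq V] (G : SimpleGraph V)
    (hsplit : IsSplitGraph G) (hmod : chromNum G % 3 = 1) :
    robustChromNum G = (chromNum G + 2) / 3 :=
  robustChromNum_of_splitGraph_mod_three_general G hsplit hmod
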